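/- arXiv:2207.11536 — 2 statements merged into one kernel-verified Lean document; each statement's English description precedes it below -/
import Mathlib

section
/- Let α : [0,∞) → [0,∞) be concave. For any probability space (Ω, P), any nonnegative random variables ξ, η with η ∈ L^p(P) for some p ≥ 1, one has E[α(ξ)·η] ≤ ‖η‖_{L^p(P)} · α(‖ξ‖_{L^{p/(p-1)}(P)}). -/
open MeasureTheory Set
open scoped ENNReal

/-!
With `c = E[η]`, Jensen's inequality for the concave `α` under the tilted probability measure
`(η / c) • P` gives `E[α(ξ) η] ≤ c α(E[ξη] / c)`; it is proved with a supergradient of `α` at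
the point `E[ξη] / c`. Hölder's inequality bounds `E[ξη] ≤ ‖ξ‖_q ‖η‖_p`, and `c ≤ ‖η‖_p`.
Since a nonnegative concave function on `[0, ∞)` is nondecreasing and satisfies
`α(λx) ≤ λ α(x)` for `λ ≥ 1`, this yields `c α(E[ξη] / c) ≤ ‖η‖_p α(‖ξ‖_q)`.
-/

theorem ConvexOn.exists_add_mul_sub_le_of_mem_interior {S : Set ℝ} {f : ℝ → ℝ}
    (hf : ConvexOn ℝ S f) {x : ℝ} (hx : x ∈ interior S) :
    ∃ m, ∀ y ∈ S, f x + m * (y - x) ≤ f y := by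
  refine ⟨derivWithin f (Ioi x) x, fun y hy => ?_⟩
  rcases lt_trichotomy y x with hyx | rfl | hxy
  · have h := (hf.slope_le_leftDeriv_of_mem_interior hy hx hyx).trans
      (hf.leftDeriv_le_rightDeriv_of_mem_interior hx)
    rw [slope_def_field, div_le_iff₀ (sub_pos.2 hyx)] at h
    linarith
  · simp
  · have h := hf.rightDeriv_le_slope_of_mem_interior hx hy hxy
    rw [slope_def_field, le_div_iff₀ (sub_pos.2 hxy)] at h
    linarith

theorem ConcaveOn.exists_le_add_mul_sub_of_mem_interior {S : Set ℝ} {f : ℝ → ℝ}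
    (hf : ConcaveOn ℝ S f) {x : ℝ} (hx : x ∈ interior S) :
    ∃ m, ∀ y ∈ S, f y ≤ f x + m * (y - x) := by
  obtain ⟨m, hm⟩ := hf.neg.exists_add_mul_sub_le_of_mem_interior hx
  refine ⟨-m, fun y hy => ?_⟩
  have := hm y hy
  simp only [Pi.neg_apply] at this
  linarith

theorem ConcaveOn.monotoneOn_of_bddBelow {f : ℝ → ℝ} {a : ℝ} (hf : ConcaveOn ℝ (Ici a) f)
    (hb : BddBelow (f '' Ici a)) : MonotoneOn f (Ici a) := by
  intro x hx y hy hxy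
  by_contra! hyx
  obtain ⟨b, hb⟩ := hb
  have hxy : x < y := hxy.lt_of_ne (by rintro rfl; exact hyx.false)
  set d := (f x - f y) / (y - x)
  have hd : 0 < d := div_pos (sub_pos.2 hyx) (sub_pos.2 hxy)
  -- past `y`, `f` decreases at least at the rate `d`, so it cannot stay above `b`
  set z := y + (f y - b + 1) / d
  have hyz : y < z := by
    have : b ≤ f y := hb (mem_image_of_mem f hy)
    have : 0 < (f y - b + 1) / d := div_pos (by linarith) hd
    linarith
  have hz : z ∈ Ici a := hy.trans hyz.le
  have hslope := hf.slope_anti_adjacent hx hz hxy hyz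
  rw [div_le_iff₀ (sub_pos.2 hyz), ← neg_sub (f x), neg_div] at hslope
  have hzb : b ≤ f z := hb (mem_image_of_mem f hz)
  have : d * (z - y) = f y - b + 1 := by simp only [z, add_sub_cancel_left]; field_simp
  linarith

theorem ConcaveOn.smul_le_map_smul {𝕜 E β : Type*} [Field 𝕜] [LinearOrder 𝕜]
    [IsStrictOrderedRing 𝕜] [AddCommGroup E] [Module 𝕜 E] [AddCommGroup β] [PartialOrder β]
    [IsOrderedAddMonoid β] [Module 𝕜 β] [PosSMulMono 𝕜 β]
    {s : Set E} {f : E → β} (hf : ConcaveOn 𝕜 s f) (h0 : (0 : E) ∈ s) (hf0 : 0 ≤ f 0)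
    {x : E} (hx : x ∈ s) {t : 𝕜} (ht0 : 0 ≤ t) (ht1 : t ≤ 1) : t • f x ≤ f (t • x) := by
  have := hf.2 hx h0 ht0 (sub_nonneg.2 ht1) (add_sub_cancel t 1)
  rw [smul_zero, add_zero] at this
  exact le_trans (le_add_of_nonneg_right (smul_nonneg (sub_nonneg.2 ht1) hf0)) this

theorem ConcaveOn.mul_map_div_le_mul_map {f : ℝ → ℝ} (hf : ConcaveOn ℝ (Ici 0) f)
    (hf_nonneg : ∀ x, 0 ≤ x → 0 ≤ f x) {c N y X : ℝ} (hc : 0 ≤ c) (hcN : c ≤ N) (hy : 0 ≤ y)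
    (hX : 0 ≤ X) (hyX : y ≤ X * N) : c * f (y / c) ≤ N * f X := by
  rcases hc.eq_or_lt with rfl | hc
  · simpa using mul_nonneg hcN (hf_nonneg X hX)
  have hN : 0 < N := hc.trans_le hcN
  have hmono := hf.monotoneOn_of_bddBelow ⟨0, by rintro _ ⟨x, hx, rfl⟩; exact hf_nonneg x hx⟩
  have hyc : y / c ≤ N / c * X := by
    rw [div_mul_eq_mul_div, div_le_div_iff_of_pos_right hc, mul_comm]; exact hyX
  calc c * f (y / c) ≤ c * f (N / c * X) := by
        gcongr
        exact hmono (div_nonneg hy hc.le) (mem_Ici.2 (by positivity)) hyc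
    _ = N * (c / N * f (N / c * X)) := by field_simp
    _ ≤ N * f (c / N * (N / c * X)) := by
        gcongr
        exact hf.smul_le_map_smul (mem_Ici.2 le_rfl) (hf_nonneg 0 le_rfl)
          (mem_Ici.2 (by positivity)) (by positivity) ((div_le_one hN).2 hcN)
    _ = N * f X := by field_simp

theorem ConcaveOn.integral_map_mul_le {Ω : Type*} [MeasurableSpace Ω] {μ : Measure Ω}
    {f : ℝ → ℝ} (hf : ConcaveOn ℝ (Ici 0) f) {ξ η : Ω → ℝ} (hξ : ∀ ω, 0 ≤ ξ ω)
    (hη : ∀ ω, 0 ≤ η ω) (hη_int : Integrable η μ) (hξη_int : Integrable (fun ω => ξ ω * η ω) μ)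
    (hfξη_int : Integrable (fun ω => f (ξ ω) * η ω) μ) :
    ∫ ω, f (ξ ω) * η ω ∂μ ≤ (∫ ω, η ω ∂μ) * f ((∫ ω, ξ ω * η ω ∂μ) / ∫ ω, η ω ∂μ) := by
  set c := ∫ ω, η ω ∂μ
  set I := ∫ ω, ξ ω * η ω ∂μ
  have hξη : ∀ ω, 0 ≤ ξ ω * η ω := fun ω => mul_nonneg (hξ ω) (hη ω)
  by_cases hI : I = 0
  · -- `0` is not interior to `Ici 0`, and `f` need not have a supergradient there (think `√`)
    have hξη0 := (integral_eq_zero_iff_of_nonneg hξη hξη_int).1 hI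
    have : (fun ω => f (ξ ω) * η ω) =ᵐ[μ] fun ω => f 0 * η ω := by
      filter_upwards [hξη0] with ω hω
      rcases mul_eq_zero.1 hω with h | h <;> simp [h]
    rw [integral_congr_ae this, integral_const_mul, hI, zero_div, mul_comm]
  have hc : c ≠ 0 := by
    intro hc
    have hη0 := (integral_eq_zero_iff_of_nonneg hη hη_int).1 hc
    refine hI (integral_eq_zero_of_ae ?_)
    filter_upwards [hη0] with ω hω
    simp [hω]
  set x := I / c
  have hx : x ∈ interior (Ici (0 : ℝ)) := by
    rw [interior_Ici]
    exact div_pos ((integral_nonneg hξη).lt_of_ne' hI) ((integral_nonneg hη).lt_of_ne' hc)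
  obtain ⟨m, hm⟩ := hf.exists_le_add_mul_sub_of_mem_interior hx
  calc ∫ ω, f (ξ ω) * η ω ∂μ ≤ ∫ ω, (f x - m * x) * η ω + m * (ξ ω * η ω) ∂μ := by
        refine integral_mono hfξη_int ((hη_int.const_mul _).add (hξη_int.const_mul _)) fun ω => ?_
        have := mul_le_mul_of_nonneg_right (hm (ξ ω) (hξ ω)) (hη ω)
        linarith
    _ = (f x - m * x) * c + m * I := by
        rw [integral_add (hη_int.const_mul _) (hξη_int.const_mul _), integral_const_mul,
          integral_const_mul]
    _ = c * f x := by simp only [x]; field_simp; ring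

theorem integral_le_toReal_eLpNorm_one {Ω : Type*} [MeasurableSpace Ω] {μ : Measure Ω}
    {f : Ω → ℝ} (hf : AEStronglyMeasurable f μ) : ∫ ω, f ω ∂μ ≤ (eLpNorm f 1 μ).toReal := by
  rw [toReal_eLpNorm hf, lpNorm_one_eq_integral_norm hf]
  exact (le_abs_self _).trans abs_integral_le_integral_abs

theorem integral_mul_le_toReal_eLpNorm_mul_toReal_eLpNorm {Ω : Type*} [MeasurableSpace Ω]
    {μ : Measure Ω} {p q : ℝ≥0∞} [p.HolderConjugate q] {f g : Ω → ℝ} (hf : MemLp f p μ)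
    (hg : MemLp g q μ) :
    ∫ ω, f ω * g ω ∂μ ≤ (eLpNorm f p μ).toReal * (eLpNorm g q μ).toReal := by
  have hHolder : eLpNorm (f • g) 1 μ ≤ eLpNorm f p μ * eLpNorm g q μ :=
    eLpNorm_smul_le_mul_eLpNorm hg.1 hf.1
  rw [← ENNReal.toReal_mul]
  exact (integral_le_toReal_eLpNorm_one (hf.1.smul hg.1)).trans
    (ENNReal.toReal_mono (ENNReal.mul_ne_top hf.eLpNorm_ne_top hg.eLpNorm_ne_top) hHolder)

theorem concave_holder_general {Ω : Type*} [MeasurableSpace Ω]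
    (μ : Measure Ω) [IsProbabilityMeasure μ]
    (α : ℝ → ℝ) (hconc : ConcaveOn ℝ (Set.Ici 0) α)
    (hnonneg : ∀ s, 0 ≤ s → 0 ≤ α s)
    (ξ η : Ω → ℝ)
    (hξ0 : ∀ ω, 0 ≤ ξ ω) (hη0 : ∀ ω, 0 ≤ η ω)
    (p q : ℝ≥0∞) (hp : 1 ≤ p) (hpq : 1/p + 1/q = 1)
    (hηp : MemLp η p μ) (hξq : MemLp ξ q μ)
    (hint : Integrable (fun ω => α (ξ ω) * η ω) μ) :
    ∫ ω, α (ξ ω) * η ω ∂μ ≤ (eLpNorm η p μ).toReal * α ((eLpNorm ξ q μ).toReal) := by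
  have : q.HolderConjugate p :=
    ENNReal.holderConjugate_iff.2 (by simpa only [one_div, add_comm] using hpq)
  have hη_int : Integrable η μ := hηp.integrable hp
  have hξη_int : Integrable (fun ω => ξ ω * η ω) μ := memLp_one_iff_integrable.1 (hηp.mul' hξq)
  have hmean : ∫ ω, η ω ∂μ ≤ (eLpNorm η p μ).toReal :=
    (integral_le_toReal_eLpNorm_one hηp.1).trans
      (ENNReal.toReal_mono hηp.eLpNorm_ne_top (eLpNorm_le_eLpNorm_of_exponent_le hp hηp.1))
  have hHolder : ∫ ω, ξ ω * η ω ∂μ ≤ (eLpNorm ξ q μ).toReal * (eLpNorm η p μ).toReal :=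
    integral_mul_le_toReal_eLpNorm_mul_toReal_eLpNorm hξq hηp
  refine (hconc.integral_map_mul_le hξ0 hη0 hη_int hξη_int hint).trans ?_
  exact hconc.mul_map_div_le_mul_map hnonneg (integral_nonneg hη0) hmean
    (integral_nonneg fun ω => mul_nonneg (hξ0 ω) (hη0 ω)) ENNReal.toReal_nonneg hHolder

/-- Hölder inequality for concave functions: for a concave
`α : [0,∞) → [0,∞)`, nonnegative random variables `ξ, η` with `η ∈ L^p` and
`ξ ∈ L^q` for conjugate exponents `1/p + 1/q = 1`, `p ≥ 1`,
`E[α(ξ)·η] ≤ ‖η‖_{L^p} · α(‖ξ‖_{L^q})`. -/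
theorem concave_holder {Ω : Type*} [MeasurableSpace Ω]
    (μ : Measure Ω) [IsProbabilityMeasure μ]
    (α : ℝ → ℝ) (hconc : ConcaveOn ℝ (Set.Ici 0) α)
    (hnonneg : ∀ s, 0 ≤ s → 0 ≤ α s)
    (ξ η : Ω → ℝ) (hξm : AEMeasurable ξ μ) (hηm : AEMeasurable η μ)
    (hξ0 : ∀ ω, 0 ≤ ξ ω) (hη0 : ∀ ω, 0 ≤ η ω)
    (p q : ℝ≥0∞) (hp : 1 ≤ p) (hpq : 1/p + 1/q = 1)
    (hηp : MemLp η p μ) (hξq : MemLp ξ q μ)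
    (hint : Integrable (fun ω => α (ξ ω) * η ω) μ) :
    ∫ ω, α (ξ ω) * η ω ∂μ ≤ (eLpNorm η p μ).toReal * α ((eLpNorm ξ q μ).toReal) :=
  concave_holder_general μ α hconc hnonneg ξ η hξ0 hη0 p q hp hpq hηp hξq hint
end

section
/- For any probability measures μ, ν on ℝᵈ with finite second moments, the log-Harnack inequality P log f(μ̃) ≤ log P f(μ) + c·W₂(μ,μ̃)² for all positive bounded measurable f (where P g(γ) := ∫ g d(P*γ) for a map P* on probability measures) is equivalent to the entropy-cost inequality Ent(P*μ | P*μ̃) ≤ c·W₂(μ,μ̃)², where Ent(ν|μ) := ∫ ρ log ρ dμ if dν = ρ dμ and +∞ otherwise. -/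
open MeasureTheory
open scoped ENNReal

/-- Squared quadratic Wasserstein distance `W₂(μ,ν)²`, as an infimum over couplings. -/
noncomputable def W2sq {E : Type*} [MeasurableSpace E] [MetricSpace E]
    (μ ν : Measure E) : ℝ≥0∞ :=
  ⨅ π : {π : Measure (E × E) // π.map Prod.fst = μ ∧ π.map Prod.snd = ν},
    ∫⁻ p, ENNReal.ofReal (dist p.1 p.2 ^ 2) ∂π.1

/-- Relative entropy `Ent(ν|μ) = ∫ ρ log ρ dμ = ∫ log(dν/dμ) dν` if `ν ≪ μ` with
integrable log-likelihood ratio, and `∞` otherwise. -/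
noncomputable def Ent {E : Type*} [MeasurableSpace E] (ν μ : Measure E) : ℝ≥0∞ :=
  open Classical in
  if ν ≪ μ ∧ Integrable (llr ν μ) ν then ENNReal.ofReal (∫ x, llr ν μ x ∂ν) else ⊤

/-! By Donsker–Varadhan duality, `Ent(ν|μ) ≤ K` holds iff `∫ log f dν ≤ log ∫ f dμ + K` for every
measurable `f` with values in some `[a, b] ⊆ (0, ∞)`. One direction is Gibbs' inequality for `ν`
against the tilt of `μ` by `log f`. Conversely, an indicator test function forces `ν ≪ μ`, and
testing with the truncations `max (min ρ n) n⁻¹` of `ρ = dν/dμ` gives, by `log x ≤ x - 1`,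
`∫ (ρ log f - f + 1) dμ ≤ K`; these integrands are nonnegative and tend to `ρ log ρ - ρ + 1`, so
Fatou's lemma bounds `Ent(ν|μ) = ∫ (ρ log ρ - ρ + 1) dμ` by `K`. Since `W₂` is symmetric, the
log-Harnack inequality for `(μ, μ̃)` is this duality for `(P*μ̃, P*μ)`, which is the entropy-cost
inequality for `(μ̃, μ)`. -/

open Real InformationTheory

section Wasserstein

variable {E : Type*} [MeasurableSpace E] [MetricSpace E]

lemma W2sq_le_swap (μ ν : Measure E) : W2sq ν μ ≤ W2sq μ ν := by
  refine le_iInf fun p => iInf_le_of_le ⟨p.1.map Prod.swap, ?_, ?_⟩ ?_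
  · rw [Measure.map_map measurable_fst measurable_swap]
    exact p.2.2
  · rw [Measure.map_map measurable_snd measurable_swap]
    exact p.2.1
  · exact (lintegral_map_equiv _ MeasurableEquiv.prodComm).trans_le
      (lintegral_congr fun q => by rw [dist_comm]; rfl).le

lemma W2sq_comm (μ ν : Measure E) : W2sq μ ν = W2sq ν μ :=
  le_antisymm (W2sq_le_swap ν μ) (W2sq_le_swap μ ν)

end Wasserstein

section Truncation

variable {ρ a b : ℝ}

lemma mul_log_clamp_sub_add_one_nonneg (ha : 0 < a) (ha1 : a ≤ 1) (hb1 : 1 ≤ b) :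
    0 ≤ ρ * log (max (min ρ b) a) - max (min ρ b) a + 1 := by
  set t := max (min ρ b) a
  have ht : 0 < t := ha.trans_le (le_max_right _ _)
  -- `t` lies between `1` and `ρ`, so `ρ log t - t + 1 = (ρ - t) log t + klFun t ≥ 0`.
  have hcross : 0 ≤ (ρ - t) * log t := by
    rcases le_total 1 ρ with h1 | h1
    · have htρ : t = min ρ b := max_eq_left (ha1.trans (le_min h1 hb1))
      exact mul_nonneg (by rw [htρ]; linarith [min_le_left ρ b])
        (log_nonneg (by rw [htρ]; exact le_min h1 hb1))
    · have htρ : t = max ρ a := by simp only [t, min_eq_left (h1.trans hb1)]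
      exact mul_nonneg_of_nonpos_of_nonpos (by rw [htρ]; linarith [le_max_left ρ a])
        (log_nonpos ht.le (by rw [htρ]; exact max_le h1 ha1))
  have := klFun_nonneg ht.le
  rw [klFun_apply] at this
  nlinarith

lemma tendsto_mul_log_clamp_sub_add_one (hρ : 0 ≤ ρ) :
    Filter.Tendsto (fun n : ℕ => ρ * log (max (min ρ (n + 1)) (n + 1 : ℝ)⁻¹)
      - max (min ρ (n + 1)) (n + 1 : ℝ)⁻¹ + 1) Filter.atTop (nhds (klFun ρ)) := by
  rcases hρ.eq_or_lt with rfl | hρ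
  · have hmax : ∀ n : ℕ, max (min 0 (n + 1 : ℝ)) (n + 1 : ℝ)⁻¹ = (n + 1 : ℝ)⁻¹ := fun n =>
      by rw [min_eq_left (by positivity), max_eq_right (by positivity)]
    simpa [hmax, klFun_zero] using
      (tendsto_one_div_add_atTop_nhds_zero_nat (𝕜 := ℝ)).neg.add_const 1
  · obtain ⟨N, hN⟩ := exists_nat_ge (max ρ ρ⁻¹)
    refine tendsto_const_nhds.congr' (Filter.eventually_atTop.2 ⟨N, fun n hn => ?_⟩)
    have hn : max ρ ρ⁻¹ ≤ n + 1 := hN.trans (by exact_mod_cast hn.trans n.le_succ)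
    dsimp only
    rw [min_eq_left (le_of_max_le_left hn),
      max_eq_left (inv_le_of_inv_le₀ hρ (le_of_max_le_right hn)), klFun_apply]
    ring

end Truncation

section Duality

variable {E : Type*} [MeasurableSpace E] {μ ν : Measure E}

lemma Ent_eq_klDiv [IsProbabilityMeasure μ] [IsProbabilityMeasure ν] : Ent ν μ = klDiv ν μ := by
  by_cases h : ν ≪ μ ∧ Integrable (llr ν μ) ν
  · rw [Ent, if_pos h, klDiv_of_ac_of_integrable h.1 h.2]
    simp
  · rw [Ent, if_neg h, eq_comm, klDiv_eq_top_iff]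
    exact fun hac hint => h ⟨hac, hint⟩

lemma integral_sub_log_integral_exp_le_integral_llr [IsProbabilityMeasure μ]
    [IsProbabilityMeasure ν] (hac : ν ≪ μ) (hllr : Integrable (llr ν μ) ν) {g : E → ℝ}
    (hgν : Integrable g ν) (hgμ : Integrable (fun x => exp (g x)) μ) :
    ∫ x, g x ∂ν - log (∫ x, exp (g x) ∂μ) ≤ ∫ x, llr ν μ x ∂ν := by
  have := isProbabilityMeasure_tilted hgμ
  -- Gibbs' inequality `KL(ν | μ.tilted g) ≥ 0`.
  have hgibbs := integral_llr_add_sub_measure_univ_nonneg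
    (hac.trans (absolutelyContinuous_tilted hgμ)) (integrable_llr_tilted_right hac hgν hllr hgμ)
  rw [integral_llr_tilted_right hac hgν hgμ hllr] at hgibbs
  simp only [probReal_univ, add_sub_cancel_right] at hgibbs
  linarith

def LogIntegralBound (ν μ : Measure E) (K : ℝ) : Prop :=
  ∀ f : E → ℝ, Measurable f → (∃ a b : ℝ, 0 < a ∧ ∀ x, a ≤ f x ∧ f x ≤ b) →
    ∫ x, log (f x) ∂ν ≤ log (∫ x, f x ∂μ) + K

lemma integrable_of_forall_mem_Icc [IsFiniteMeasure μ] {f : E → ℝ} (hf : Measurable f) {a b : ℝ}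
    (hab : ∀ x, a ≤ f x ∧ f x ≤ b) : Integrable f μ :=
  .of_bound hf.aestronglyMeasurable (max |a| |b|)
    (.of_forall fun x => abs_le_max_abs_abs (hab x).1 (hab x).2)

lemma integrable_log_of_forall_mem_Icc [IsFiniteMeasure μ] {f : E → ℝ} (hf : Measurable f)
    {a b : ℝ} (ha : 0 < a) (hab : ∀ x, a ≤ f x ∧ f x ≤ b) : Integrable (fun x => log (f x)) μ :=
  integrable_of_forall_mem_Icc hf.log fun x =>
    ⟨log_le_log ha (hab x).1, log_le_log (ha.trans_le (hab x).1) (hab x).2⟩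

lemma integral_log_le_log_integral_add_integral_llr [IsProbabilityMeasure μ]
    [IsProbabilityMeasure ν] (hac : ν ≪ μ) (hllr : Integrable (llr ν μ) ν) {f : E → ℝ}
    (hf : Measurable f) {a b : ℝ} (ha : 0 < a) (hab : ∀ x, a ≤ f x ∧ f x ≤ b) :
    ∫ x, log (f x) ∂ν ≤ log (∫ x, f x ∂μ) + ∫ x, llr ν μ x ∂ν := by
  have hexp : ∀ x, exp (log (f x)) = f x := fun x => exp_log (ha.trans_le (hab x).1)
  have := integral_sub_log_integral_exp_le_integral_llr hac hllr
    (integrable_log_of_forall_mem_Icc hf ha hab)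
    (by simpa only [hexp] using integrable_of_forall_mem_Icc hf hab)
  simp only [hexp] at this
  linarith

lemma absolutelyContinuous_of_logIntegralBound [IsProbabilityMeasure μ] [IsFiniteMeasure ν]
    {K : ℝ} (H : LogIntegralBound ν μ K) : ν ≪ μ := by
  refine Measure.AbsolutelyContinuous.mk fun s hs hμs => ?_
  have hbound : ∀ r : ℝ, 0 ≤ r → r * ν.real s ≤ K := by
    intro r hr
    have hμ : (fun x => exp (s.indicator (fun _ => r) x)) =ᵐ[μ] fun _ => 1 := by
      filter_upwards [measure_eq_zero_iff_ae_notMem.1 hμs] with x hx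
      simp [hx]
    have := H (fun x => exp (s.indicator (fun _ => r) x))
      ((measurable_const.indicator hs).exp)
      ⟨1, exp r, one_pos, fun x => ⟨one_le_exp (Set.indicator_nonneg (fun _ _ => hr) x),
        exp_le_exp.2 (Set.indicator_le_self' (fun _ _ => hr) x)⟩⟩
    simpa [integral_congr_ae hμ, integral_indicator_const _ hs, mul_comm] using this
  by_contra hνs
  have hpos : 0 < ν.real s := ENNReal.toReal_pos hνs (measure_ne_top ν s)
  have := hbound ((|K| + 1) / ν.real s) (by positivity)
  rw [div_mul_cancel₀ _ hpos.ne'] at this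
  linarith [le_abs_self K]

lemma integrable_toReal_rnDeriv_mul_log_sub_add_one [IsFiniteMeasure μ] [IsFiniteMeasure ν]
    {f : E → ℝ} {a b : ℝ} (hac : ν ≪ μ) (hf : Measurable f) (ha : 0 < a)
    (hab : ∀ x, a ≤ f x ∧ f x ≤ b) :
    Integrable (fun x => (ν.rnDeriv μ x).toReal * log (f x) - f x + 1) μ :=
  (((integrable_toReal_rnDeriv_mul_iff hac).2 (integrable_log_of_forall_mem_Icc hf ha hab)).sub
    (integrable_of_forall_mem_Icc hf hab)).add (integrable_const 1)

lemma integral_toReal_rnDeriv_mul_log_sub_add_one_le [IsProbabilityMeasure μ]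
    [IsFiniteMeasure ν] {f : E → ℝ} {a b : ℝ} (hac : ν ≪ μ) (hf : Measurable f)
    (ha : 0 < a) (hab : ∀ x, a ≤ f x ∧ f x ≤ b) {K : ℝ} (H : LogIntegralBound ν μ K) :
    ∫ x, ((ν.rnDeriv μ x).toReal * log (f x) - f x + 1) ∂μ ≤ K := by
  have hlog :=
    (integrable_toReal_rnDeriv_mul_iff hac).2 (integrable_log_of_forall_mem_Icc hf ha hab)
  have hfμ : Integrable (fun x => f x) μ := integrable_of_forall_mem_Icc hf hab
  have hpos : 0 < ∫ x, f x ∂μ :=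
    ha.trans_le (by simpa using integral_mono (integrable_const a) hfμ fun x => (hab x).1)
  rw [integral_add (f := fun x => (ν.rnDeriv μ x).toReal * log (f x) - f x) (hlog.sub hfμ)
      (integrable_const 1), integral_sub hlog hfμ,
    integral_toReal_rnDeriv_mul hac]
  simp only [integral_const, probReal_univ, smul_eq_mul, one_mul]
  linarith [H f hf ⟨a, b, ha, hab⟩, log_le_sub_one_of_pos hpos]

lemma klDiv_le_ofReal_of_logIntegralBound [IsProbabilityMeasure μ] [IsFiniteMeasure ν]
    {K : ℝ} (H : LogIntegralBound ν μ K) : klDiv ν μ ≤ ENNReal.ofReal K := by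
  have hac := absolutelyContinuous_of_logIntegralBound H
  set ρ : E → ℝ := fun x => (ν.rnDeriv μ x).toReal
  set s : ℕ → E → ℝ := fun n x => max (min (ρ x) (n + 1)) (n + 1 : ℝ)⁻¹
  have hs : ∀ n, Measurable (s n) := fun n =>
    ((Measure.measurable_rnDeriv ν μ).ennreal_toReal.min measurable_const).max measurable_const
  have hs_pos : ∀ n : ℕ, 0 < (n + 1 : ℝ)⁻¹ := fun n => by positivity
  have hs_mem : ∀ (n : ℕ) x, (n + 1 : ℝ)⁻¹ ≤ s n x ∧ s n x ≤ n + 1 := fun n x =>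
    ⟨le_max_right _ _,
      max_le (min_le_right _ _) ((inv_le_one_of_one_le₀ (by simp)).trans (by simp))⟩
  have hbound : ∀ n,
      ∫⁻ x, ENNReal.ofReal (ρ x * log (s n x) - s n x + 1) ∂μ ≤ ENNReal.ofReal K := by
    intro n
    rw [← ofReal_integral_eq_lintegral_ofReal
      (integrable_toReal_rnDeriv_mul_log_sub_add_one hac (hs n) (hs_pos n) (hs_mem n))
      (.of_forall fun x => mul_log_clamp_sub_add_one_nonneg (hs_pos n)
        (inv_le_one_of_one_le₀ (by simp)) (by simp))]
    exact ENNReal.ofReal_le_ofReal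
      (integral_toReal_rnDeriv_mul_log_sub_add_one_le hac (hs n) (hs_pos n) (hs_mem n) H)
  calc klDiv ν μ = ∫⁻ x, ENNReal.ofReal (klFun (ρ x)) ∂μ := klDiv_eq_lintegral_klFun_of_ac hac
    _ = ∫⁻ x, Filter.liminf (fun n => ENNReal.ofReal (ρ x * log (s n x) - s n x + 1))
          Filter.atTop ∂μ :=
        lintegral_congr fun x => ((ENNReal.continuous_ofReal.tendsto _).comp
          (tendsto_mul_log_clamp_sub_add_one ENNReal.toReal_nonneg)).liminf_eq.symm
    _ ≤ Filter.liminf (fun n => ∫⁻ x, ENNReal.ofReal (ρ x * log (s n x) - s n x + 1) ∂μ)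
          Filter.atTop :=
        lintegral_liminf_le fun n => by fun_prop
    _ ≤ ENNReal.ofReal K := Filter.liminf_le_of_frequently_le' (.of_forall hbound)

theorem Ent_le_ofReal_iff_logIntegralBound [IsProbabilityMeasure μ] [IsProbabilityMeasure ν]
    {K : ℝ} (hK : 0 ≤ K) : Ent ν μ ≤ ENNReal.ofReal K ↔ LogIntegralBound ν μ K := by
  rw [Ent_eq_klDiv]
  refine ⟨fun h f hf ⟨a, b, ha, hab⟩ => ?_, klDiv_le_ofReal_of_logIntegralBound⟩
  obtain ⟨hac, hllr⟩ := klDiv_ne_top_iff.1 (ne_top_of_le_ne_top ENNReal.ofReal_ne_top h)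
  have hKL : ∫ x, llr ν μ x ∂ν ≤ K := by
    rw [← toReal_klDiv_of_measure_eq hac (by simp)]
    exact ENNReal.toReal_le_of_le_ofReal hK h
  linarith [integral_log_le_log_integral_add_integral_llr hac hllr hf ha hab]

end Duality

/-- For a map `P*` on probability measures on `ℝᵈ` (with
`P f(γ) := ∫ f d(P*γ)`), the log-Harnack inequality
`P (log f)(μ̃) ≤ log (P f (μ)) + c W₂(μ,μ̃)²` for all bounded positive measurable `f`
is equivalent to the entropy-cost inequality `Ent(P*μ | P*μ̃) ≤ c W₂(μ,μ̃)²`,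
both quantified over probability measures `μ, μ̃` with finite second moments. -/
theorem logHarnack_iff_entropy_cost {d : ℕ}
    (Pstar : Measure (EuclideanSpace ℝ (Fin d)) → Measure (EuclideanSpace ℝ (Fin d)))
    (hPstar : ∀ γ : Measure (EuclideanSpace ℝ (Fin d)),
      IsProbabilityMeasure γ → IsProbabilityMeasure (Pstar γ))
    (c : ℝ) (hc : 0 ≤ c) :
    (∀ γ γ' : Measure (EuclideanSpace ℝ (Fin d)),
        IsProbabilityMeasure γ → IsProbabilityMeasure γ' →
        Integrable (fun x => ‖x‖ ^ 2) γ → Integrable (fun x => ‖x‖ ^ 2) γ' →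
        ∀ f : EuclideanSpace ℝ (Fin d) → ℝ, Measurable f →
        (∃ a b : ℝ, 0 < a ∧ ∀ x, a ≤ f x ∧ f x ≤ b) →
        ∫ x, Real.log (f x) ∂(Pstar γ')
          ≤ Real.log (∫ x, f x ∂(Pstar γ)) + c * (W2sq γ γ').toReal)
    ↔
    (∀ γ γ' : Measure (EuclideanSpace ℝ (Fin d)),
        IsProbabilityMeasure γ → IsProbabilityMeasure γ' →
        Integrable (fun x => ‖x‖ ^ 2) γ → Integrable (fun x => ‖x‖ ^ 2) γ' →
        Ent (Pstar γ) (Pstar γ') ≤ ENNReal.ofReal (c * (W2sq γ γ').toReal)) := by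
  have duality : ∀ γ γ' : Measure (EuclideanSpace ℝ (Fin d)),
      IsProbabilityMeasure γ → IsProbabilityMeasure γ' →
      (Ent (Pstar γ) (Pstar γ') ≤ ENNReal.ofReal (c * (W2sq γ γ').toReal) ↔
        LogIntegralBound (Pstar γ) (Pstar γ') (c * (W2sq γ' γ).toReal)) := by
    intro γ γ' hγ hγ'
    have := hPstar γ hγ
    have := hPstar γ' hγ'
    rw [W2sq_comm γ' γ]
    exact Ent_le_ofReal_iff_logIntegralBound (mul_nonneg hc ENNReal.toReal_nonneg)
  constructor
  · exact fun hLH γ γ' hγ hγ' hm hm' => (duality γ γ' hγ hγ').2 (hLH γ' γ hγ' hγ hm' hm)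
  · exact fun hEC γ γ' hγ hγ' hm hm' => (duality γ' γ hγ' hγ).1 (hEC γ' γ hγ' hγ hm' hm)
end
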